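/- arXiv:1410.0064 — 2 statements merged into one kernel-verified Lean document; each statement's English description precedes it below -/
import Mathlib

section
/- Let Q(w) = a_0 + \sum_{i=1}^m a_i e^{\ell_i w} with real coefficients a_i, a_0 \neq 0, a_m \neq 0, and exponents 0 < \ell_1 \le \ell_2 \le \cdots \le \ell_{m-1} < \ell_m. Then there exists a constant C > 0, depending only on a_0, \ldots, a_m, \ell_1, and \ell_m - \ell_{m-1}, such that every complex zero w of Q satisfies -C < Re(w) < C. -/
/-!
On a zero `w` of `∑ aᵢ e^{μᵢ w}`, a term whose exponent `μⱼ` exceeds all others by at least `δ`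
is cancelled by the rest, so for `Re w ≥ 0` we get `|aⱼ| e^{δ Re w} ≤ ∑ |aᵢ|`, i.e.
`Re w ≤ log (∑ |aᵢ| / |aⱼ|) / δ`; symmetrically for a smallest exponent and `Re w ≤ 0`.
For `Q` the constant term `a₀` (exponent `0`) is the smallest, with gap `ℓ₁`, and `a_m e^{ℓ_m w}`
the largest, with gap `min (ℓ_m - ℓ_{m-1}) ℓ₁`.
-/

open Finset

lemma norm_ofReal_mul_exp_ofReal_mul (a μ : ℝ) (w : ℂ) :
    ‖(a : ℂ) * Complex.exp (μ * w)‖ = |a| * Real.exp (μ * w.re) := by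
  rw [norm_mul, Complex.norm_real, Real.norm_eq_abs, Complex.norm_exp, Complex.re_ofReal_mul]

lemma norm_sum_ofReal_mul_exp_le {ι : Type*} (s : Finset ι) (a μ : ι → ℝ) (w : ℂ) {t : ℝ}
    (ht : ∀ i ∈ s, μ i * w.re ≤ t) :
    ‖∑ i ∈ s, (a i : ℂ) * Complex.exp (μ i * w)‖ ≤ (∑ i ∈ s, |a i|) * Real.exp t := by
  calc ‖∑ i ∈ s, (a i : ℂ) * Complex.exp (μ i * w)‖
      ≤ ∑ i ∈ s, |a i| * Real.exp (μ i * w.re) :=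
        (norm_sum_le _ _).trans_eq (sum_congr rfl fun i _ => norm_ofReal_mul_exp_ofReal_mul ..)
    _ ≤ ∑ i ∈ s, |a i| * Real.exp t := by gcongr with i hi; exact ht i hi
    _ = (∑ i ∈ s, |a i|) * Real.exp t := (sum_mul s _ _).symm

lemma le_log_div_of_mul_exp_le {A S δ x : ℝ} (hA : 0 < A) (hδ : 0 < δ)
    (h : A * Real.exp (δ * x) ≤ S) : x ≤ Real.log (S / A) / δ := by
  have hexp : Real.exp (δ * x) ≤ S / A := by rwa [le_div_iff₀' hA]
  rw [le_div_iff₀ hδ, mul_comm]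
  exact (Real.le_log_iff_exp_le ((Real.exp_pos _).trans_le hexp)).mpr hexp

theorem re_le_of_sum_ofReal_mul_exp_eq_zero {ι : Type*} [DecidableEq ι] {s : Finset ι}
    {a μ : ι → ℝ} {w : ℂ} {j : ι} {δ : ℝ} (hj : j ∈ s) (haj : a j ≠ 0) (hδ : 0 < δ)
    (hμ : ∀ i ∈ s, i ≠ j → μ i ≤ μ j - δ)
    (hw : ∑ i ∈ s, (a i : ℂ) * Complex.exp (μ i * w) = 0) :
    w.re ≤ Real.log ((∑ i ∈ s, |a i|) / |a j|) / δ := by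
  have haj' : 0 < |a j| := abs_pos.mpr haj
  have hsum_ge : |a j| ≤ ∑ i ∈ s, |a i| := single_le_sum (fun i _ => abs_nonneg (a i)) hj
  rcases lt_or_ge w.re 0 with hneg | hnonneg
  · exact hneg.le.trans (div_nonneg (Real.log_nonneg ((one_le_div haj').mpr hsum_ge)) hδ.le)
  apply le_log_div_of_mul_exp_le haj' hδ
  have hcancel : (a j : ℂ) * Complex.exp (μ j * w)
      = -∑ i ∈ s.erase j, (a i : ℂ) * Complex.exp (μ i * w) := by
    rw [← sum_erase_add _ _ hj] at hw
    linear_combination hw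
  have hrest := norm_sum_ofReal_mul_exp_le (s.erase j) a μ w (t := (μ j - δ) * w.re)
    fun i hi => mul_le_mul_of_nonneg_right (hμ i (mem_of_mem_erase hi) (ne_of_mem_erase hi))
      hnonneg
  have hsum_erase : ∑ i ∈ s.erase j, |a i| ≤ ∑ i ∈ s, |a i| :=
    sum_le_sum_of_subset_of_nonneg (erase_subset j s) fun i _ _ => abs_nonneg (a i)
  refine le_of_mul_le_mul_right ?_ (Real.exp_pos ((μ j - δ) * w.re))
  calc |a j| * Real.exp (δ * w.re) * Real.exp ((μ j - δ) * w.re)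
      = ‖(a j : ℂ) * Complex.exp (μ j * w)‖ := by
        rw [norm_ofReal_mul_exp_ofReal_mul, mul_assoc, ← Real.exp_add]
        ring_nf
    _ ≤ (∑ i ∈ s.erase j, |a i|) * Real.exp ((μ j - δ) * w.re) := by
        rwa [hcancel, norm_neg]
    _ ≤ (∑ i ∈ s, |a i|) * Real.exp ((μ j - δ) * w.re) := by gcongr

theorem neg_le_re_of_sum_ofReal_mul_exp_eq_zero {ι : Type*} [DecidableEq ι] {s : Finset ι}
    {a μ : ι → ℝ} {w : ℂ} {j : ι} {δ : ℝ} (hj : j ∈ s) (haj : a j ≠ 0) (hδ : 0 < δ)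
    (hμ : ∀ i ∈ s, i ≠ j → μ j + δ ≤ μ i)
    (hw : ∑ i ∈ s, (a i : ℂ) * Complex.exp (μ i * w) = 0) :
    -(Real.log ((∑ i ∈ s, |a i|) / |a j|) / δ) ≤ w.re := by
  have hw' : ∑ i ∈ s, (a i : ℂ) * Complex.exp (((-μ i : ℝ) : ℂ) * -w) = 0 := by
    simpa only [Complex.ofReal_neg, neg_mul_neg] using hw
  have := re_le_of_sum_ofReal_mul_exp_eq_zero (μ := fun i => -μ i) hj haj hδ
    (fun i hi hij => by linarith [hμ i hi hij]) hw'
  rw [Complex.neg_re] at this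
  linarith

/-- Zeros of a poly-exponential have bounded real part, with a bound depending
only on the coefficients, `ℓ 1`, and the gap `ℓ m - ℓ (m-1)`. -/
theorem stmt0 (m : ℕ) (hm : 1 ≤ m) (a : ℕ → ℝ) (ha0 : a 0 ≠ 0) (ham : a m ≠ 0)
    (L1 : ℝ) (hL1 : 0 < L1) (gap : ℝ) (hgap : 0 < gap) :
    ∃ C > (0 : ℝ), ∀ ℓ : ℕ → ℝ,
      (∀ i ∈ Finset.Icc 1 m, 0 < ℓ i) →
      (∀ i j, 1 ≤ i → i ≤ j → j ≤ m → ℓ i ≤ ℓ j) →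
      ℓ (m - 1) < ℓ m →
      ℓ 1 = L1 → ℓ m - ℓ (m - 1) = gap →
      ∀ w : ℂ,
        (a 0 : ℂ) + ∑ i ∈ Finset.Icc 1 m, (a i : ℂ) * Complex.exp ((ℓ i : ℂ) * w) = 0 →
        -C < w.re ∧ w.re < C := by
  set S := ∑ i ∈ range (m + 1), |a i|
  set g := min gap L1
  set B₀ := Real.log (S / |a 0|) / L1
  set Bₘ := Real.log (S / |a m|) / g
  refine ⟨|Bₘ| + |B₀| + 1, by positivity, ?_⟩
  intro ℓ _ hmono _ hℓ1 hgapEq w hw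
  set μ := Function.update ℓ 0 0
  have hμ0 : μ 0 = 0 := Function.update_self 0 0 ℓ
  have hμ : ∀ i, 1 ≤ i → μ i = ℓ i := fun i hi => Function.update_of_ne (by omega) _ _
  have hQ : ∑ i ∈ range (m + 1), (a i : ℂ) * Complex.exp (μ i * w) = 0 := by
    rw [sum_range_eq_add_Ico _ (by omega : 0 < m + 1), Ico_add_one_right_eq_Icc, hμ0,
      Complex.ofReal_zero, zero_mul, Complex.exp_zero, mul_one, ← hw]
    exact congrArg _ (sum_congr rfl fun i hi => by rw [hμ i (mem_Icc.mp hi).1])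
  have htop_gap : ∀ i ∈ range (m + 1), i ≠ m → μ i ≤ μ m - g := by
    intro i hi him
    have hi : i ≤ m - 1 := by have := mem_range.mp hi; omega
    rcases Nat.eq_zero_or_pos i with rfl | hi0
    · linarith [min_le_right gap L1, hmono 1 m le_rfl hm le_rfl, hμ m hm]
    · linarith [min_le_left gap L1, hmono i (m - 1) hi0 hi (m.sub_le 1), hμ i hi0, hμ m hm]
  have hbottom_gap : ∀ i ∈ range (m + 1), i ≠ 0 → μ 0 + L1 ≤ μ i := by
    intro i hi hi0
    have hi : 1 ≤ i ∧ i ≤ m := by have := mem_range.mp hi; omega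
    linarith [hmono 1 i le_rfl hi.1 hi.2, hμ i hi.1]
  have hupper : w.re ≤ Bₘ :=
    re_le_of_sum_ofReal_mul_exp_eq_zero (self_mem_range_succ m) ham (lt_min hgap hL1)
      htop_gap hQ
  have hlower : -B₀ ≤ w.re :=
    neg_le_re_of_sum_ofReal_mul_exp_eq_zero (mem_range.mpr (by omega)) ha0 hL1 hbottom_gap hQ
  constructor <;> linarith [le_abs_self Bₘ, le_abs_self B₀, abs_nonneg Bₘ, abs_nonneg B₀]
end

section
/- Let \Gamma be a finite directed graph with vertex set V and edge set E, let \ell : E \to \mathbb{N}_{\ge 1} assign positive integer lengths, let \Gamma_\ell be the graph obtained by subdividing each edge e into \ell(e) edges, let A_\ell be the adjacency matrix of \Gamma_\ell, and let A(t) \in M_{|V|}(\mathbb{Z}[t]) be defined by A(t)_{uv} = \sum_{e : u \to v} t^{\ell(e)}. Then for every nonzero \lambda \in \mathbb{C}, \lambda is an eigenvalue of A_\ell if and only if \det(I - A(\lambda^{-1})) = 0. -/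
/-! Along a subdivided edge every interior vertex has a single out-neighbour, so an eigenvector `f`
of `A_ℓ` for `λ ≠ 0` satisfies `f (e, j) = λ⁻¹ ^ d * f (t e)`, where `d` is the distance from
`(e, j)` to the head of `e`. Thus `f` is determined by its restriction `g` to `V`, and the
eigenvector equation at the original vertices becomes `A(λ⁻¹) g = g`; conversely every such `g`
extends by this formula to an eigenvector. -/

open Finset

/-- Adjacency matrix of the subdivision `Γ_ℓ` of a finite directed multigraph:
vertices are the original vertices `V` together with, for each edge `e`, the
`ℓ e - 1` interior subdivision vertices. -/
noncomputable def subAdj {V E : Type} [Fintype V] [DecidableEq V] [Fintype E] [DecidableEq E]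
    (s t : E → V) (ℓ : E → ℕ) :
    Matrix (V ⊕ (Σ e : E, Fin (ℓ e - 1))) (V ⊕ (Σ e : E, Fin (ℓ e - 1))) ℂ :=
  fun x y =>
    match x, y with
    | Sum.inl u, Sum.inl v =>
        ((Finset.univ.filter (fun e => ℓ e = 1 ∧ s e = u ∧ t e = v)).card : ℂ)
    | Sum.inl u, Sum.inr ⟨e, j⟩ => if s e = u ∧ (j : ℕ) = 0 then 1 else 0
    | Sum.inr ⟨e, j⟩, Sum.inl v => if t e = v ∧ (j : ℕ) + 2 = ℓ e then 1 else 0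
    | Sum.inr ⟨e, j⟩, Sum.inr ⟨e', j'⟩ =>
        if e = e' ∧ (j' : ℕ) = (j : ℕ) + 1 then 1 else 0

/-- McMullen's matrix `A(x)` with `A(x)_{uv} = ∑_{e : u → v} x ^ ℓ(e)`. -/
noncomputable def perronMat {V E : Type} [Fintype V] [DecidableEq V] [Fintype E] [DecidableEq E]
    (s t : E → V) (ℓ : E → ℕ) (x : ℂ) : Matrix V V ℂ :=
  fun u v => ∑ e ∈ Finset.univ.filter (fun e => s e = u ∧ t e = v), x ^ (ℓ e)

open Matrix

lemma Fin.sum_ite_val_eq_zero {M : Type*} [AddCommMonoid M] (n : ℕ) (c : ℕ → M) :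
    ∑ k : Fin n, (if (k : ℕ) = 0 then c k else 0) = if 0 < n then c 0 else 0 := by
  rw [Fin.sum_univ_eq_sum_range (fun k => if k = 0 then c k else 0), Finset.sum_ite_eq']
  simp

lemma mul_inv_pow_eq_inv_pow_sub_one {G : Type*} [GroupWithZero G] {a : G} (ha : a ≠ 0) {n : ℕ}
    (hn : 1 ≤ n) : a * a⁻¹ ^ n = a⁻¹ ^ (n - 1) := by
  obtain ⟨k, rfl⟩ := Nat.exists_eq_add_of_le' hn
  rw [pow_succ', mul_inv_cancel_left₀ ha, Nat.add_sub_cancel]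

/-- `ℓ p.1 - 1 - p.2` is the distance from the interior vertex `p` to the head `t p.1` of its
edge. -/
noncomputable def subdivExtend {V E : Type} (t : E → V) (ℓ : E → ℕ) (x : ℂ) (g : V → ℂ) :
    V ⊕ (Σ e : E, Fin (ℓ e - 1)) → ℂ :=
  Sum.elim g fun p => x ^ (ℓ p.1 - 1 - p.2) * g (t p.1)

@[simp]
lemma subdivExtend_zero {V E : Type} (t : E → V) (ℓ : E → ℕ) (x : ℂ) :
    subdivExtend t ℓ x 0 = 0 := by
  ext (u | p) <;> simp [subdivExtend]

section Subdivision

variable {V E : Type} [Fintype V] [DecidableEq V] [Fintype E] [DecidableEq E]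
  (s t : E → V) (ℓ : E → ℕ)

lemma perronMat_mulVec_apply (x : ℂ) (g : V → ℂ) (u : V) :
    (perronMat s t ℓ x *ᵥ g) u = ∑ e with s e = u, x ^ ℓ e * g (t e) := by
  simp only [mulVec, dotProduct, perronMat, Finset.sum_filter, Finset.sum_mul]
  rw [Finset.sum_comm]
  refine Finset.sum_congr rfl fun e _ => ?_
  split_ifs with h <;> simp [h]

lemma subAdj_mulVec_inr (f : V ⊕ (Σ e : E, Fin (ℓ e - 1)) → ℂ) (e : E) (j : Fin (ℓ e - 1)) :
    (subAdj s t ℓ *ᵥ f) (.inr ⟨e, j⟩) =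
      if h : (j : ℕ) + 1 < ℓ e - 1 then f (.inr ⟨e, ⟨j + 1, h⟩⟩) else f (.inl (t e)) := by
  have hj := j.isLt
  split_ifs with h
  · have hnotlast : (j : ℕ) + 2 ≠ ℓ e := by omega
    have hnext : ∀ x : Σ e : E, Fin (ℓ e - 1),
        e = x.1 ∧ (x.2 : ℕ) = j + 1 ↔ ⟨e, ⟨j + 1, h⟩⟩ = x := by
      rintro ⟨e', k⟩
      constructor
      · rintro ⟨rfl, hk : (k : ℕ) = j + 1⟩
        simp [Fin.ext_iff, hk]
      · rintro ⟨⟩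
        simp
    simp [mulVec, dotProduct, subAdj, Fintype.sum_sum_type, hnext, hnotlast]
  · have hlast : (j : ℕ) + 2 = ℓ e := by omega
    have hnone : ∀ x : Σ e : E, Fin (ℓ e - 1), ¬ (e = x.1 ∧ (x.2 : ℕ) = j + 1) := by
      rintro ⟨e', k⟩ ⟨rfl, hk : (k : ℕ) = j + 1⟩
      omega
    simp [mulVec, dotProduct, subAdj, Fintype.sum_sum_type, hnone, hlast]

lemma subAdj_mulVec_subdivExtend_inl (hℓ : ∀ e, 1 ≤ ℓ e) (x : ℂ) (g : V → ℂ) (u : V) :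
    (subAdj s t ℓ *ᵥ subdivExtend t ℓ x g) (.inl u) =
      ∑ e with s e = u, x ^ (ℓ e - 1) * g (t e) := by
  simp only [mulVec, dotProduct, subAdj, subdivExtend, Fintype.sum_sum_type, Fintype.sum_sigma,
    Finset.natCast_card_filter, Finset.sum_mul, ite_and, ite_mul, one_mul, zero_mul, Sum.elim_inl,
    Sum.elim_inr, Finset.sum_ite_irrel, Finset.sum_const_zero]
  rw [Finset.sum_comm, ← Finset.sum_add_distrib, Finset.sum_filter]
  refine Finset.sum_congr rfl fun e _ => ?_
  rw [Fin.sum_ite_val_eq_zero _ fun k => x ^ (ℓ e - 1 - k) * g (t e)]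
  have := hℓ e
  by_cases hs : s e = u <;> by_cases h1 : ℓ e = 1 <;> simp [hs, h1]
  omega

variable {s t ℓ}

lemma subAdj_mulVec_subdivExtend_inr {lam : ℂ} (hlam : lam ≠ 0) (g : V → ℂ)
    (p : Σ e : E, Fin (ℓ e - 1)) :
    (subAdj s t ℓ *ᵥ subdivExtend t ℓ lam⁻¹ g) (.inr p) =
      lam * subdivExtend t ℓ lam⁻¹ g (.inr p) := by
  obtain ⟨e, j⟩ := p
  have hj := j.isLt
  simp only [subdivExtend, Sum.elim_inr, ← mul_assoc,
    mul_inv_pow_eq_inv_pow_sub_one hlam (show 1 ≤ ℓ e - 1 - j by omega)]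
  rw [subAdj_mulVec_inr]
  split_ifs with h
  · rw [Sum.elim_inr, show ℓ e - 1 - (j + 1) = ℓ e - 1 - j - 1 by omega]
  · simp [show ℓ e - 1 - j - 1 = 0 by omega]

lemma subAdj_mulVec_subdivExtend_eq_smul_iff (hℓ : ∀ e, 1 ≤ ℓ e) {lam : ℂ} (hlam : lam ≠ 0)
    (g : V → ℂ) :
    subAdj s t ℓ *ᵥ subdivExtend t ℓ lam⁻¹ g = lam • subdivExtend t ℓ lam⁻¹ g ↔
      perronMat s t ℓ lam⁻¹ *ᵥ g = g := by
  have hinl : ∀ u, (subAdj s t ℓ *ᵥ subdivExtend t ℓ lam⁻¹ g) (.inl u) =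
      lam * (perronMat s t ℓ lam⁻¹ *ᵥ g) u := by
    intro u
    rw [subAdj_mulVec_subdivExtend_inl s t ℓ hℓ, perronMat_mulVec_apply, Finset.mul_sum]
    refine Finset.sum_congr rfl fun e _ => ?_
    rw [← mul_assoc, mul_inv_pow_eq_inv_pow_sub_one hlam (hℓ e)]
  simp only [funext_iff, Sum.forall, Pi.smul_apply, smul_eq_mul, hinl,
    subAdj_mulVec_subdivExtend_inr hlam]
  simp [subdivExtend, hlam]

lemma eq_subdivExtend_of_mulVec_eq_smul {lam : ℂ} (hlam : lam ≠ 0)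
    {f : V ⊕ (Σ e : E, Fin (ℓ e - 1)) → ℂ} (hf : subAdj s t ℓ *ᵥ f = lam • f) :
    f = subdivExtend t ℓ lam⁻¹ (f ∘ Sum.inl) := by
  have hf' : ∀ x, f x = lam⁻¹ * (subAdj s t ℓ *ᵥ f) x := fun x => by
    rw [hf, Pi.smul_apply, smul_eq_mul, inv_mul_cancel_left₀ hlam]
  have hinr : ∀ e (n : ℕ) (j : Fin (ℓ e - 1)), ℓ e - 1 - j = n →
      f (.inr ⟨e, j⟩) = lam⁻¹ ^ n * f (.inl (t e)) := by
    intro e n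
    induction n with
    | zero => intro j hj; have := j.isLt; omega
    | succ n ih =>
      intro j hj
      rw [hf', subAdj_mulVec_inr]
      split_ifs with hnext
      · rw [ih _ (by dsimp only; omega), ← mul_assoc, ← pow_succ']
      · obtain rfl : n = 0 := by omega
        simp
  funext x
  rcases x with u | ⟨e, j⟩
  · rfl
  · exact hinr e _ j rfl

end Subdivision

/-- A nonzero `λ` is an eigenvalue of the adjacency matrix of the subdivided graph
iff `det(I - A(λ⁻¹)) = 0`. -/
theorem stmt8 (V E : Type) [Fintype V] [DecidableEq V] [Fintype E] [DecidableEq E]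
    (s t : E → V) (ℓ : E → ℕ) (hℓ : ∀ e, 1 ≤ ℓ e)
    (lam : ℂ) (hlam : lam ≠ 0) :
    (∃ f : (V ⊕ (Σ e : E, Fin (ℓ e - 1))) → ℂ, f ≠ 0 ∧ (subAdj s t ℓ).mulVec f = lam • f)
      ↔ Matrix.det (1 - perronMat s t ℓ lam⁻¹) = 0 := by
  rw [← exists_mulVec_eq_zero_iff]
  simp only [sub_mulVec, one_mulVec, sub_eq_zero]
  constructor
  · rintro ⟨f, hf0, hf⟩
    have hext := eq_subdivExtend_of_mulVec_eq_smul hlam hf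
    refine ⟨f ∘ Sum.inl, fun hg => hf0 ?_, ?_⟩
    · rw [hext, hg, subdivExtend_zero]
    · rw [eq_comm, ← subAdj_mulVec_subdivExtend_eq_smul_iff hℓ hlam, ← hext]
      exact hf
  · rintro ⟨g, hg0, hg⟩
    exact ⟨subdivExtend t ℓ lam⁻¹ g, fun h => hg0 (congrArg (· ∘ Sum.inl) h),
      (subAdj_mulVec_subdivExtend_eq_smul_iff hℓ hlam g).2 hg.symm⟩
end
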